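/- arXiv:0706.0401 — 4 statements merged into one kernel-verified Lean document; each statement's English description precedes it below -/
import Mathlib

section
/- Let a > 0, let u be a smooth complex-valued function defined on a neighbourhood of the circle r = a in {r > 0}, let λ ∈ ℂ with λ ≠ 0, and fix θ ∈ ℝ. Then the 2×2 matrices A(λ) and Ā(λ) (both evaluated at the point (a,θ), with the same spectral parameter λ) are equal if and only if u_r(a,θ) = −2/a. Consequently, under the boundary condition u_r|_{r=a} = −2/a, every solution Ȳ of Ȳ_θ = Ā(λ)|_{r=a} Ȳ also solves Y_θ = A(λ)|_{r=a} Y; this is case (i) of the lemma on integrable boundary conditions for the Liouville equation, with F = identity and h(λ) = λ. -/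
open Matrix

/-- The matrix `A(λ)` of the Lax pair of the polar Liouville equation, evaluated at the
boundary point `r = a`, expressed through the values `uv = u(a,θ)`, `ur = u_r(a,θ)`,
`ut = u_θ(a,θ)`. -/
noncomputable def AmatBd (a θ : ℝ) (uv ur ut lam : ℂ) : Matrix (Fin 2) (Fin 2) ℂ :=
  (Complex.I * a) •
  !![Complex.exp (uv + Complex.I * θ) / (2 * lam) - lam * Complex.exp (-(Complex.I * θ)),
     -Complex.exp (uv + Complex.I * θ) / (2 * lam) - ur / 4 - Complex.I * ut / (4 * a);
     Complex.exp (uv + Complex.I * θ) / (2 * lam) - ur / 4 - Complex.I * ut / (4 * a),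
     -Complex.exp (uv + Complex.I * θ) / (2 * lam) + lam * Complex.exp (-(Complex.I * θ))]

/-- The Kelvin-transformed matrix `Ā(λ̃)` of the Lax pair of the polar Liouville equation,
evaluated at the boundary point `r = a`. -/
noncomputable def AbarBd (a θ : ℝ) (uv ur ut lt : ℂ) : Matrix (Fin 2) (Fin 2) ℂ :=
  (Complex.I * a) •
  !![Complex.exp (uv + Complex.I * θ) / (2 * lt) - lt * Complex.exp (-(Complex.I * θ)),
     -Complex.exp (uv + Complex.I * θ) / (2 * lt) + ur / 4 + 1 / (a : ℂ)
       - Complex.I * ut / (4 * a);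
     Complex.exp (uv + Complex.I * θ) / (2 * lt) + ur / 4 + 1 / (a : ℂ)
       - Complex.I * ut / (4 * a),
     -Complex.exp (uv + Complex.I * θ) / (2 * lt) + lt * Complex.exp (-(Complex.I * θ))]

lemma AbarBd_eq_AmatBd_add (a θ : ℝ) (uv ur ut lam : ℂ) :
    AbarBd a θ uv ur ut lam =
      AmatBd a θ uv ur ut lam + (Complex.I * a * (ur / 2 + 1 / a)) • !![0, 1; 1, 0] := by
  ext i j
  fin_cases i <;> fin_cases j <;> simp [AmatBd, AbarBd] <;> ring

lemma AmatBd_eq_AbarBd_iff {a : ℝ} (ha : a ≠ 0) (θ : ℝ) (uv ur ut lam : ℂ) :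
    AmatBd a θ uv ur ut lam = AbarBd a θ uv ur ut lam ↔ ur = -2 / (a : ℂ) := by
  have haC : (a : ℂ) ≠ 0 := Complex.ofReal_ne_zero.mpr ha
  have hswap : !![(0 : ℂ), 1; 1, 0] ≠ 0 := fun h => by simpa using congr_fun (congr_fun h 0) 1
  rw [AbarBd_eq_AmatBd_add, left_eq_add, smul_eq_zero, or_iff_left hswap, mul_eq_zero,
    or_iff_right (mul_ne_zero Complex.I_ne_zero haC)]
  constructor <;> intro h <;> field_simp at h ⊢ <;> linear_combination h

theorem liouville_boundary_case_i_general (a : ℝ) (ha : 0 < a) (u : ℝ × ℝ → ℂ) (lam : ℂ) (θ : ℝ)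
    (ur ut : ℝ → ℂ) :
    (AmatBd a θ (u (a, θ)) (ur θ) (ut θ) lam = AbarBd a θ (u (a, θ)) (ur θ) (ut θ) lam
      ↔ ur θ = -2 / (a : ℂ)) ∧
    ((∀ t : ℝ, ur t = -2 / (a : ℂ)) →
      ∀ Y : ℝ → Fin 2 → ℂ,
        (∀ t : ℝ, HasDerivAt Y (AbarBd a t (u (a, t)) (ur t) (ut t) lam *ᵥ Y t) t) →
        ∀ t : ℝ, HasDerivAt Y (AmatBd a t (u (a, t)) (ur t) (ut t) lam *ᵥ Y t) t) := by
  refine ⟨AmatBd_eq_AbarBd_iff ha.ne' .., fun hbc Y hY t => ?_⟩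
  rw [(AmatBd_eq_AbarBd_iff ha.ne' ..).2 (hbc t)]
  exact hY t

/-- Case (i) of the lemma on integrable boundary conditions for the Liouville equation
(`F` the identity, `h(λ) = λ`): at a fixed boundary point `(a,θ)`, `A(λ) = Ā(λ)` iff
`u_r(a,θ) = −2/a`; consequently, under the boundary condition `u_r|_{r=a} = −2/a`, every
solution `Ȳ` of `Ȳ_θ = Ā(λ)|_{r=a} Ȳ` also solves `Y_θ = A(λ)|_{r=a} Y`. -/
theorem liouville_boundary_case_i (a : ℝ) (ha : 0 < a) (u : ℝ × ℝ → ℂ) (V : Set (ℝ × ℝ))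
    (hVopen : IsOpen V) (hVcirc : {p : ℝ × ℝ | p.1 = a} ⊆ V)
    (hVpos : ∀ p ∈ V, 0 < p.1) (hu : ContDiffOn ℝ (⊤ : ℕ∞) u V)
    (lam : ℂ) (hlam : lam ≠ 0) (θ : ℝ)
    (ur ut : ℝ → ℂ) (hur : ∀ t : ℝ, ur t = fderiv ℝ u (a, t) (1, 0))
    (hut : ∀ t : ℝ, ut t = fderiv ℝ u (a, t) (0, 1)) :
    (AmatBd a θ (u (a, θ)) (ur θ) (ut θ) lam = AbarBd a θ (u (a, θ)) (ur θ) (ut θ) lam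
      ↔ ur θ = -2 / (a : ℂ)) ∧
    ((∀ t : ℝ, ur t = -2 / (a : ℂ)) →
      ∀ Y : ℝ → Fin 2 → ℂ,
        (∀ t : ℝ, HasDerivAt Y (AbarBd a t (u (a, t)) (ur t) (ut t) lam *ᵥ Y t) t) →
        ∀ t : ℝ, HasDerivAt Y (AmatBd a t (u (a, t)) (ur t) (ut t) lam *ᵥ Y t) t) :=
  liouville_boundary_case_i_general a ha u lam θ ur ut
end

section
/- Let a > 0, let u be a smooth complex-valued function defined on a neighbourhood of the circle r = a in {r > 0}, let λ ∈ ℂ with λ ≠ 0, fix θ ∈ ℝ, and let F be the constant 2×2 matrix [[0,−1],[−1,0]]. Then A(λ)|_{(a,θ)}·F = F·Ā(−λ)|_{(a,θ)} if and only if u_r(a,θ) = −2/a. Consequently, under the boundary condition u_r|_{r=a} = −2/a, for every solution Ȳ of Ȳ_θ = Ā(−λ)|_{r=a} Ȳ, the function Y = F·Ȳ solves Y_θ = A(λ)|_{r=a} Y; this is case (ii) of the lemma on integrable boundary conditions for the Liouville equation, with h(λ) = −λ. -/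
open Matrix

/-!
Right multiplication by `F = [[0,−1],[−1,0]]` swaps the columns and left multiplication swaps
the rows (each with a sign), so `A(λ)·F = F·Ā(−λ)` says that `A(λ)` is `Ā(−λ)` rotated by 180°.
With `h(λ) = −λ` the diagonal entries match identically, while the off-diagonal ones match iff
`−u_r/4 = u_r/4 + 1/a`, i.e. `u_r = −2/a`. Once `F` intertwines the two matrices at every boundary
point, the constant gauge `Y = F·Ȳ` carries solutions of the one linear system to the other.
-/

theorem Matrix.mul_antidiag_eq_antidiag_mul_iff {R : Type*} [Ring R]
    (M N : Matrix (Fin 2) (Fin 2) R) :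
    M * !![0, -1; -1, 0] = !![0, -1; -1, 0] * N ↔ M = N.submatrix Fin.rev Fin.rev := by
  simp only [← Matrix.ext_iff, Fin.forall_fin_two, mul_apply, Fin.sum_univ_two, submatrix_apply,
    of_apply, cons_val', cons_val_zero, cons_val_one, cons_val_fin_one, mul_zero, zero_mul,
    mul_neg, neg_mul, mul_one, one_mul, zero_add, add_zero, neg_inj, Fin.rev_zero, Fin.reduceLast,
    Fin.reduceRev]
  tauto

theorem amatBd_mul_antidiag_eq_iff {a : ℝ} (ha : a ≠ 0) (θ : ℝ) (uv ur ut lam : ℂ) :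
    AmatBd a θ uv ur ut lam * !![0, -1; -1, 0] = !![0, -1; -1, 0] * AbarBd a θ uv ur ut (-lam) ↔
      ur = -2 / (a : ℂ) := by
  rw [Matrix.mul_antidiag_eq_antidiag_mul_iff, AmatBd, AbarBd, ← Matrix.ext_iff]
  simp only [neg_div, Matrix.smul_apply, of_apply, cons_val', cons_val_fin_one, smul_eq_mul,
    mul_neg, div_neg, neg_mul, sub_neg_eq_add, neg_neg, one_div, smul_of, smul_cons, smul_empty,
    submatrix_apply, Fin.forall_fin_two, Fin.isValue, cons_val_zero, Fin.rev_zero,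
    Fin.reduceLast, cons_val_one, Fin.reduceRev, mul_eq_mul_left_iff, mul_eq_zero,
    Complex.I_ne_zero, Complex.ofReal_eq_zero, ha, or_self, or_false, sub_left_inj, and_true]
  constructor
  · rintro ⟨-, hoff⟩
    linear_combination (-2) * hoff
  · rintro rfl
    refine ⟨⟨?_, ?_⟩, ?_⟩ <;> ring

section Gauge

variable {𝕜 ι : Type*} [RCLike 𝕜] [Fintype ι] {Y : ℝ → ι → 𝕜} {t : ℝ}

theorem HasDerivAt.const_mulVec {v : ι → 𝕜} (F : Matrix ι ι 𝕜) (h : HasDerivAt Y v t) :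
    HasDerivAt (fun s => F *ᵥ Y s) (F *ᵥ v) t :=
  ((LinearMap.toContinuousLinearMap F.mulVecLin).restrictScalars ℝ).hasFDerivAt.comp_hasDerivAt
    t h

theorem HasDerivAt.mulVec_of_mul_eq_mul {A B F : Matrix ι ι 𝕜} (hAF : A * F = F * B)
    (h : HasDerivAt Y (B *ᵥ Y t) t) :
    HasDerivAt (fun s => F *ᵥ Y s) (A *ᵥ (F *ᵥ Y t)) t := by
  rw [mulVec_mulVec, hAF, ← mulVec_mulVec]
  exact h.const_mulVec F

end Gauge

theorem liouville_boundary_case_ii_general (a : ℝ) (ha : 0 < a) (u : ℝ × ℝ → ℂ)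
    (lam : ℂ) (θ : ℝ)
    (ur ut : ℝ → ℂ)
    (F : Matrix (Fin 2) (Fin 2) ℂ) (hF : F = !![0, -1; -1, 0]) :
    (AmatBd a θ (u (a, θ)) (ur θ) (ut θ) lam * F
        = F * AbarBd a θ (u (a, θ)) (ur θ) (ut θ) (-lam)
      ↔ ur θ = -2 / (a : ℂ)) ∧
    ((∀ t : ℝ, ur t = -2 / (a : ℂ)) →
      ∀ Ybar : ℝ → Fin 2 → ℂ,
        (∀ t : ℝ, HasDerivAt Ybar (AbarBd a t (u (a, t)) (ur t) (ut t) (-lam) *ᵥ Ybar t) t) →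
        ∀ t : ℝ, HasDerivAt (fun s => F *ᵥ Ybar s)
          (AmatBd a t (u (a, t)) (ur t) (ut t) lam *ᵥ (F *ᵥ Ybar t)) t) := by
  subst hF
  refine ⟨amatBd_mul_antidiag_eq_iff ha.ne' θ _ _ _ lam, fun hbc Ybar hYbar t => ?_⟩
  have hconj := (amatBd_mul_antidiag_eq_iff ha.ne' t (u (a, t)) (ur t) (ut t) lam).2 (hbc t)
  exact (hYbar t).mulVec_of_mul_eq_mul hconj

/-- Case (ii) of the lemma on integrable boundary conditions for the Liouville equation
(`F = [[0,−1],[−1,0]]`, `h(λ) = −λ`): at a fixed boundary point `(a,θ)`,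
`A(λ)·F = F·Ā(−λ)` iff `u_r(a,θ) = −2/a`; consequently, under the boundary condition
`u_r|_{r=a} = −2/a`, for every solution `Ȳ` of `Ȳ_θ = Ā(−λ)|_{r=a} Ȳ` the function
`Y = F·Ȳ` solves `Y_θ = A(λ)|_{r=a} Y`. -/
theorem liouville_boundary_case_ii (a : ℝ) (ha : 0 < a) (u : ℝ × ℝ → ℂ) (V : Set (ℝ × ℝ))
    (hVopen : IsOpen V) (hVcirc : {p : ℝ × ℝ | p.1 = a} ⊆ V)
    (hVpos : ∀ p ∈ V, 0 < p.1) (hu : ContDiffOn ℝ (⊤ : ℕ∞) u V)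
    (lam : ℂ) (hlam : lam ≠ 0) (θ : ℝ)
    (ur ut : ℝ → ℂ) (hur : ∀ t : ℝ, ur t = fderiv ℝ u (a, t) (1, 0))
    (hut : ∀ t : ℝ, ut t = fderiv ℝ u (a, t) (0, 1))
    (F : Matrix (Fin 2) (Fin 2) ℂ) (hF : F = !![0, -1; -1, 0]) :
    (AmatBd a θ (u (a, θ)) (ur θ) (ut θ) lam * F
        = F * AbarBd a θ (u (a, θ)) (ur θ) (ut θ) (-lam)
      ↔ ur θ = -2 / (a : ℂ)) ∧
    ((∀ t : ℝ, ur t = -2 / (a : ℂ)) →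
      ∀ Ybar : ℝ → Fin 2 → ℂ,
        (∀ t : ℝ, HasDerivAt Ybar (AbarBd a t (u (a, t)) (ur t) (ut t) (-lam) *ᵥ Ybar t) t) →
        ∀ t : ℝ, HasDerivAt (fun s => F *ᵥ Ybar s)
          (AmatBd a t (u (a, t)) (ur t) (ut t) lam *ᵥ (F *ᵥ Ybar t)) t) :=
  liouville_boundary_case_ii_general a ha u lam θ ur ut F hF
end

section
/- (Lemma on even soliton solutions.) Let N = 2k with k ≥ 1, let z₁,…,z_N ∈ (−1,1) be nonzero reals with z_{N+1−i} = −z_i for all i, and let m₁,…,m_N : ℝ → ℝ be positive functions satisfying m_{N+1−i}(t) = m_i(−t) for all i and t. For n ∈ ℤ and t ∈ ℝ define the N×N matrix M(n,t) with entries M_{ij}(n,t) = δ_{ij} + √(m_i(t)·m_j(t))·(z_i·z_j)^{n+1}/(1 − z_i·z_j). Then det M(n,t) = det M(n,−t) for all n ∈ ℤ and t ∈ ℝ. Consequently, for any constant c, the function v(n,t) = c + ln( det M(n,t) / det M(n−1,t) ) satisfies v(n,t) = v(n,−t) for all n and t (wherever the determinants are nonzero), i.e. the N-soliton solution built from such symmetric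 data is an even function of t. -/
/-!
Reversing the order of the rows and columns, `i ↦ N + 1 - i`, maps `M(n, t)` to `M(n, -t)`:
it flips the signs of `z_i` and `z_j` together, so `z_i z_j` is unchanged, and it exchanges
`m_i(t)` with `m_i(-t)`. A simultaneous permutation of rows and columns preserves the determinant.
-/

theorem Matrix.det_eq_of_apply_eq_apply_equiv {n R : Type*} [Fintype n] [DecidableEq n]
    [CommRing R] (e : n ≃ n) {A B : Matrix n n R} (h : ∀ i j, A i j = B (e i) (e j)) :
    A.det = B.det := by
  rw [← Matrix.det_submatrix_equiv_self e B]
  congr 1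
  ext i j
  exact h i j

theorem even_soliton_determinant_general (N : ℕ)
    (z : Fin N → ℝ)
    (hzsym : ∀ i, z i.rev = -z i)
    (m : Fin N → ℝ → ℝ)
    (hmsym : ∀ i t, m i.rev t = m i (-t))
    (M : ℤ → ℝ → Matrix (Fin N) (Fin N) ℝ)
    (hM : ∀ (n : ℤ) (t : ℝ) (i j : Fin N),
      M n t i j = (if i = j then (1 : ℝ) else 0)
        + Real.sqrt (m i t * m j t) * (z i * z j) ^ (n + 1) / (1 - z i * z j)) :
    (∀ (n : ℤ) (t : ℝ), (M n t).det = (M n (-t)).det) ∧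
    (∀ (c : ℝ) (n : ℤ) (t : ℝ), (M n t).det ≠ 0 → (M (n - 1) t).det ≠ 0 →
      c + Real.log ((M n t).det / (M (n - 1) t).det)
        = c + Real.log ((M n (-t)).det / (M (n - 1) (-t)).det)) := by
  have det_even : ∀ (n : ℤ) (t : ℝ), (M n t).det = (M n (-t)).det := fun n t ↦
    Matrix.det_eq_of_apply_eq_apply_equiv Fin.revPerm fun i j ↦ by
      simp only [Fin.revPerm_apply, hM, hmsym, neg_neg, hzsym, neg_mul_neg, Fin.rev_inj]
  exact ⟨det_even, fun c n t _ _ ↦ by rw [det_even n t, det_even (n - 1) t]⟩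

/-- Lemma on even soliton solutions: if `N = 2k`, the data `z_i ∈ (−1,1) \ {0}` satisfy
`z_{N+1−i} = −z_i` and the positive coefficients satisfy `m_{N+1−i}(t) = m_i(−t)`, then
the determinant of the soliton matrix
`M_{ij}(n,t) = δ_{ij} + √(m_i(t) m_j(t)) (z_i z_j)^{n+1}/(1 − z_i z_j)` is even in `t`;
consequently the N-soliton solution `v(n,t) = c + ln(det M(n,t)/det M(n−1,t))` is an
even function of `t` (wherever the determinants are nonzero). -/
theorem even_soliton_determinant (N k : ℕ) (hk : 1 ≤ k) (hN : N = 2 * k)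
    (z : Fin N → ℝ) (hz : ∀ i, z i ∈ Set.Ioo (-1 : ℝ) 1) (hz0 : ∀ i, z i ≠ 0)
    (hzsym : ∀ i, z i.rev = -z i)
    (m : Fin N → ℝ → ℝ) (hmpos : ∀ i t, 0 < m i t)
    (hmsym : ∀ i t, m i.rev t = m i (-t))
    (M : ℤ → ℝ → Matrix (Fin N) (Fin N) ℝ)
    (hM : ∀ (n : ℤ) (t : ℝ) (i j : Fin N),
      M n t i j = (if i = j then (1 : ℝ) else 0)
        + Real.sqrt (m i t * m j t) * (z i * z j) ^ (n + 1) / (1 - z i * z j)) :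
    (∀ (n : ℤ) (t : ℝ), (M n t).det = (M n (-t)).det) ∧
    (∀ (c : ℝ) (n : ℤ) (t : ℝ), (M n t).det ≠ 0 → (M (n - 1) t).det ≠ 0 →
      c + Real.log ((M n t).det / (M (n - 1) t).det)
        = c + Real.log ((M n (-t)).det / (M (n - 1) (-t)).det)) :=
  even_soliton_determinant_general N z hzsym m hmsym M hM
end

section
/- (Reduction of the radial Neumann problem to the one-dimensional Toda lattice.) Let a > 0 and let v : ℤ → ℝ → ℝ be twice differentiable in t and satisfy the one-dimensional Toda lattice equation v″(n,t) = ω̄(n−1,t) − ω̄(n,t) for all n ∈ ℤ and t ∈ ℝ, where ω̄(n,t) = exp(v(n,t) − v(n+1,t)), together with v′(n,0) = 0 for all n ∈ ℤ. Define u(n,r) = v(n, ln(r/a)) + 2n·ln(r) for r > 0. Then u satisfies u_rr(n,r) + (1/r)u_r(n,r) = ω(n−1,r) − ω(n,r) for all n ∈ ℤ and r > 0, where ω(n,r) = exp(u(n,r) − u(n+1,r)), and u satisfies the Neumann boundary condition u_r(n,a) = 2n/a for all n ∈ ℤ. -/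
/-!
In the variable `t = ln (r / a)` one has `r ∂_r = ∂_t`, so the radial Laplacian
`∂_r² + r⁻¹ ∂_r` becomes `r⁻² ∂_t²`, and it kills the harmonic term `2 n ln r`.
That term contributes `-2 ln r` to every difference `u(n) - u(n+1)`, hence the factor `r⁻²`
to every `ω(n)`, which matches the `r⁻²` on the left. At `r = a` we have `t = 0`, where `v′`
vanishes, so only the `2 n / a` coming from `2 n ln r` survives in `u_r(n, a)`.
-/

open Real Filter Topology

section LogChangeOfVariable

variable {f : ℝ → ℝ} {a c r : ℝ}

theorem hasDerivAt_log_div (ha : a ≠ 0) (hr : r ≠ 0) :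
    HasDerivAt (fun x => log (x / a)) r⁻¹ r :=
  (((hasDerivAt_id' r).div_const a).log (div_ne_zero hr ha)).congr_deriv (by field_simp)

theorem hasDerivAt_comp_log_div_add_mul_log (hf : DifferentiableAt ℝ f (log (r / a)))
    (ha : a ≠ 0) (hr : r ≠ 0) :
    HasDerivAt (fun x => f (log (x / a)) + c * log x) ((deriv f (log (r / a)) + c) / r) r :=
  ((hf.hasDerivAt.comp r (hasDerivAt_log_div ha hr)).add
    ((hasDerivAt_log hr).const_mul c)).congr_deriv (by ring)

theorem deriv_comp_log_div_add_mul_log_eventuallyEq (hf : Differentiable ℝ f)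
    (ha : a ≠ 0) (hr : r ≠ 0) :
    deriv (fun x => f (log (x / a)) + c * log x)
      =ᶠ[𝓝 r] fun x => (deriv f (log (x / a)) + c) / x := by
  filter_upwards [isOpen_ne.mem_nhds hr] with x hx
  exact (hasDerivAt_comp_log_div_add_mul_log (hf _) ha hx).deriv

theorem radialLaplacian_comp_log_div_add_mul_log (hf : Differentiable ℝ f)
    (hf' : Differentiable ℝ (deriv f)) (ha : a ≠ 0) (hr : r ≠ 0) :
    deriv (deriv fun x => f (log (x / a)) + c * log x) r
        + (1 / r) * deriv (fun x => f (log (x / a)) + c * log x) r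
      = deriv (deriv f) (log (r / a)) / r ^ 2 := by
  have hsecond : HasDerivAt (fun x => (deriv f (log (x / a)) + c) / x)
      ((deriv (deriv f) (log (r / a)) * r⁻¹ * r - (deriv f (log (r / a)) + c) * 1) / r ^ 2) r :=
    (((hf' _).hasDerivAt.comp r (hasDerivAt_log_div ha hr)).add_const c).div
      (hasDerivAt_id r) hr
  rw [(hsecond.congr_of_eventuallyEq
      (deriv_comp_log_div_add_mul_log_eventuallyEq hf ha hr)).deriv,
    (hasDerivAt_comp_log_div_add_mul_log (hf _) ha hr).deriv]
  field_simp
  ring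

end LogChangeOfVariable

theorem exp_add_two_mul_log_sub {r m m' : ℝ} (hr : 0 < r) (hm : m' = m + 1) (x y : ℝ) :
    exp (x + 2 * m * log r - (y + 2 * m' * log r)) = exp (x - y) / r ^ 2 := by
  have hsq : exp (2 * log r) = r ^ 2 := by
    rw [two_mul, exp_add, exp_log hr, sq]
  rw [hm, show x + 2 * m * log r - (y + 2 * (m + 1) * log r) = x - y - 2 * log r by ring,
    exp_sub, hsq]

/-- Reduction of the radial Neumann problem to the one-dimensional Toda lattice: if
`v(n,t)` solves the one-dimensional Toda lattice `v″(n) = ω̄(n−1) − ω̄(n)` with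
`v′(n,0) = 0`, then `u(n,r) = v(n, ln(r/a)) + 2n ln r` solves the rotationally symmetric
polar Toda lattice `u_rr(n) + (1/r) u_r(n) = ω(n−1) − ω(n)` for `r > 0` with the Neumann
boundary condition `u_r(n,a) = 2n/a`. -/
theorem radial_neumann_reduction (a : ℝ) (ha : 0 < a) (v : ℤ → ℝ → ℝ)
    (hv1 : ∀ n : ℤ, Differentiable ℝ (v n))
    (hv2 : ∀ n : ℤ, Differentiable ℝ (deriv (v n)))
    (hToda : ∀ (n : ℤ) (t : ℝ),
      deriv (deriv (v n)) t
        = Real.exp (v (n - 1) t - v n t) - Real.exp (v n t - v (n + 1) t))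
    (hbc : ∀ n : ℤ, deriv (v n) 0 = 0)
    (u : ℤ → ℝ → ℝ)
    (hu : ∀ (n : ℤ) (r : ℝ), u n r = v n (Real.log (r / a)) + 2 * n * Real.log r) :
    (∀ (n : ℤ) (r : ℝ), 0 < r →
      deriv (deriv (u n)) r + (1 / r) * deriv (u n) r
        = Real.exp (u (n - 1) r - u n r) - Real.exp (u n r - u (n + 1) r)) ∧
    (∀ n : ℤ, deriv (u n) a = 2 * n / a) := by
  have hun : ∀ n : ℤ, u n = fun r => v n (log (r / a)) + 2 * n * log r :=
    fun n => funext (hu n)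
  refine ⟨fun n r hr => ?_, fun n => ?_⟩
  · rw [hu (n - 1), hu (n + 1), hu n, hun n,
      radialLaplacian_comp_log_div_add_mul_log (hv1 n) (hv2 n) ha.ne' hr.ne', hToda,
      exp_add_two_mul_log_sub (m := ((n - 1 : ℤ) : ℝ)) hr (by push_cast; ring),
      exp_add_two_mul_log_sub (m' := ((n + 1 : ℤ) : ℝ)) hr (by push_cast; ring), sub_div]
  · rw [hun n, (hasDerivAt_comp_log_div_add_mul_log (hv1 n _) ha.ne' ha.ne').deriv,
      div_self ha.ne', log_one, hbc, zero_add]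
end
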